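/- Let K ≥ 1, let π ∈ ℝ^K satisfy π_i > 0 for all i and Σ_{i=1}^K π_i = 1, let α ∈ (0,1], and let Z ∈ ℝ^K. Then the supremum of Σ_{i=1}^K π'_i Z_i over all π' in the ambiguity set 𝔸_α = {π' ∈ ℝ^K : π'_i ≥ 0 for all i, Σ_{i=1}^K π'_i = 1, π'_i ≤ π_i/α for all i} equals inf_{t∈ℝ} ( t + (1/α) Σ_{i=1}^K π_i · max(Z_i − t, 0) ). (Dual representation of the average value-at-risk.) -/
import Mathlib


/-- Dual representation of the average value-at-risk: for a probability vector `π` with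
positive entries and `α ∈ (0,1]`, the supremum of `∑ i, π' i * Z i` over the ambiguity set
`𝔸_α = {π' ∈ 𝔻 | π' i ≤ π i / α}` equals
`inf_t ( t + (1/α) * ∑ i, π i * max (Z i − t) 0 )`. -/
theorem avar_dual_representation
    (K : ℕ) (hK : 1 ≤ K) (π : Fin K → ℝ) (hπ : ∀ i, 0 < π i)
    (hsum : ∑ i, π i = 1) (α : ℝ) (hα : 0 < α) (hα1 : α ≤ 1) (Z : Fin K → ℝ) :
    sSup {s : ℝ | ∃ π' : Fin K → ℝ, (∀ i, 0 ≤ π' i) ∧ (∑ i, π' i = 1) ∧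
        (∀ i, π' i ≤ π i / α) ∧ s = ∑ i, π' i * Z i} =
      sInf {v : ℝ | ∃ t : ℝ, v = t + (1 / α) * ∑ i, π i * max (Z i - t) 0} := by
  classical
  set S : Set ℝ := {s : ℝ | ∃ π' : Fin K → ℝ, (∀ i, 0 ≤ π' i) ∧ (∑ i, π' i = 1) ∧
      (∀ i, π' i ≤ π i / α) ∧ s = ∑ i, π' i * Z i} with hS
  set T : Set ℝ := {v : ℝ | ∃ t : ℝ, v = t + (1 / α) * ∑ i, π i * max (Z i - t) 0} with hT
  -- weak duality
  have weak : ∀ s ∈ S, ∀ v ∈ T, s ≤ v := by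
    rintro s ⟨π', hnn, hsum', hle, rfl⟩ v ⟨t, rfl⟩
    have h1 : ∑ i, π' i * Z i = t + ∑ i, π' i * (Z i - t) := by
      rw [Finset.sum_congr rfl (fun i _ => mul_sub (π' i) (Z i) t),
        Finset.sum_sub_distrib, ← Finset.sum_mul, hsum']
      ring
    rw [h1]
    have h2 : ∑ i, π' i * (Z i - t) ≤ ∑ i, (π i / α) * max (Z i - t) 0 := by
      apply Finset.sum_le_sum
      intro i _
      calc π' i * (Z i - t) ≤ π' i * max (Z i - t) 0 :=
            mul_le_mul_of_nonneg_left (le_max_left _ _) (hnn i)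
        _ ≤ (π i / α) * max (Z i - t) 0 :=
            mul_le_mul_of_nonneg_right (hle i) (le_max_right _ _)
    have h3 : ∑ i, (π i / α) * max (Z i - t) 0 = (1 / α) * ∑ i, π i * max (Z i - t) 0 := by
      rw [Finset.mul_sum]
      exact Finset.sum_congr rfl (fun i _ => by ring)
    linarith [h2, h3.symm ▸ h2]
  -- the quantile t*
  have huniv : (Finset.univ : Finset (Fin K)).Nonempty := by
    have : 0 < K := hK
    exact ⟨⟨0, this⟩, Finset.mem_univ _⟩
  set S0 : Finset (Fin K) :=
    Finset.univ.filter (fun i => α ≤ ∑ j ∈ Finset.univ.filter (fun j => Z i ≤ Z j), π j) with hS0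
  have hS0ne : S0.Nonempty := by
    obtain ⟨imin, _, hmin⟩ := Finset.exists_min_image Finset.univ Z huniv
    refine ⟨imin, Finset.mem_filter.2 ⟨Finset.mem_univ _, ?_⟩⟩
    have : Finset.univ.filter (fun j => Z imin ≤ Z j) = Finset.univ := by
      apply Finset.filter_true_of_mem
      intro j hj; exact hmin j hj
    rw [this, hsum]; exact hα1
  obtain ⟨i₀, hi₀, hmax⟩ := Finset.exists_max_image S0 Z hS0ne
  set t₀ : ℝ := Z i₀ with ht₀
  set A : Finset (Fin K) := Finset.univ.filter (fun i => t₀ < Z i) with hA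
  set B : Finset (Fin K) := Finset.univ.filter (fun i => Z i = t₀) with hB
  set Pgt : ℝ := ∑ i ∈ A, π i with hPgt
  set Peq : ℝ := ∑ i ∈ B, π i with hPeq
  -- P(Z ≥ t₀) ≥ α
  have hge : α ≤ ∑ j ∈ Finset.univ.filter (fun j => t₀ ≤ Z j), π j := by
    have := (Finset.mem_filter.1 hi₀).2
    exact this
  -- decomposition P≥ = P> + P=
  have hsplit : ∑ j ∈ Finset.univ.filter (fun j => t₀ ≤ Z j), π j = Pgt + Peq := by
    have hfe : Finset.univ.filter (fun j => t₀ ≤ Z j) = A ∪ B := by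
      ext j
      simp only [Finset.mem_filter, Finset.mem_union, Finset.mem_univ, true_and, hA, hB]
      constructor
      · intro h
        rcases lt_or_eq_of_le h with h' | h'
        · exact Or.inl h'
        · exact Or.inr h'.symm
      · rintro (h | h)
        · exact le_of_lt h
        · exact le_of_eq h.symm
    have hdisj : Disjoint A B := by
      rw [Finset.disjoint_left]
      intro j hjA hjB
      have h1 := (Finset.mem_filter.1 hjA).2
      have h2 := (Finset.mem_filter.1 hjB).2
      exact absurd h2 (ne_of_gt h1)
    rw [hfe, Finset.sum_union hdisj]
  -- P(Z > t₀) ≤ α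
  have hgt : Pgt ≤ α := by
    by_contra h
    push_neg at h
    have hAne : A.Nonempty := by
      rcases Finset.eq_empty_or_nonempty A with he | hne
      · rw [he, Finset.sum_empty] at hPgt
        rw [hPgt] at h; linarith
      · exact hne
    obtain ⟨j₁, hj₁A, hj₁min⟩ := Finset.exists_min_image A Z hAne
    have hsub : A ⊆ Finset.univ.filter (fun j => Z j₁ ≤ Z j) := by
      intro j hj
      exact Finset.mem_filter.2 ⟨Finset.mem_univ _, hj₁min j hj⟩
    have hle2 : Pgt ≤ ∑ j ∈ Finset.univ.filter (fun j => Z j₁ ≤ Z j), π j := by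
      apply Finset.sum_le_sum_of_subset_of_nonneg hsub
      intro i _ _; exact (hπ i).le
    have hj₁S0 : j₁ ∈ S0 := Finset.mem_filter.2 ⟨Finset.mem_univ _, by linarith⟩
    have := hmax j₁ hj₁S0
    have hZj₁ : t₀ < Z j₁ := (Finset.mem_filter.1 hj₁A).2
    linarith
  -- P(Z = t₀) > 0
  have hPeqpos : 0 < Peq := by
    have hi₀B : i₀ ∈ B := Finset.mem_filter.2 ⟨Finset.mem_univ _, rfl⟩
    have := Finset.single_le_sum (f := π) (fun i _ => (hπ i).le) hi₀B
    linarith [hπ i₀]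
  -- construct optimal π'
  set c : ℝ := (α - Pgt) / (α * Peq) with hc
  set π' : Fin K → ℝ := fun i => if t₀ < Z i then π i / α else if Z i = t₀ then c * π i else 0
    with hπ'
  have hcnn : 0 ≤ c := div_nonneg (by linarith) (by positivity)
  have hcle : c ≤ 1 / α := by
    rw [hc, div_le_div_iff₀ (by positivity) hα]
    have : α - Pgt ≤ Peq := by
      have := hsplit ▸ hge
      linarith
    calc (α - Pgt) * α ≤ Peq * α := by nlinarith
      _ ≤ 1 * (α * Peq) := by ring_nf; exact le_refl _
  have hnn' : ∀ i, 0 ≤ π' i := by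
    intro i
    simp only [hπ']
    split_ifs with h1 h2
    · exact div_nonneg (hπ i).le hα.le
    · exact mul_nonneg hcnn (hπ i).le
    · exact le_refl 0
  have hle' : ∀ i, π' i ≤ π i / α := by
    intro i
    simp only [hπ']
    split_ifs with h1 h2
    · exact le_refl _
    · calc c * π i ≤ (1 / α) * π i := mul_le_mul_of_nonneg_right hcle (hπ i).le
        _ = π i / α := by ring
    · exact div_nonneg (hπ i).le hα.le
  -- key sum computations
  have hzero_off : ∀ i ∈ Finset.univ, i ∉ A ∪ B → ∀ f : Fin K → ℝ, π' i * f i = 0 := by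
    intro i _ hi f
    have h1 : ¬ t₀ < Z i := fun h => hi (Finset.mem_union_left _ (Finset.mem_filter.2 ⟨Finset.mem_univ _, h⟩))
    have h2 : ¬ Z i = t₀ := fun h => hi (Finset.mem_union_right _ (Finset.mem_filter.2 ⟨Finset.mem_univ _, h⟩))
    simp [hπ', h1, h2]
  have hdisj : Disjoint A B := by
    rw [Finset.disjoint_left]
    intro j hjA hjB
    exact absurd ((Finset.mem_filter.1 hjB).2) (ne_of_gt ((Finset.mem_filter.1 hjA).2))
  have hsum_split : ∀ f : Fin K → ℝ,
      ∑ i, π' i * f i = ∑ i ∈ A, (π i / α) * f i + ∑ i ∈ B, (c * π i) * f i := by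
    intro f
    rw [← Finset.sum_subset (Finset.subset_univ (A ∪ B))
      (fun i hi hni => hzero_off i hi hni f)]
    rw [Finset.sum_union hdisj]
    congr 1
    · apply Finset.sum_congr rfl
      intro i hi
      have := (Finset.mem_filter.1 hi).2
      simp [hπ', this]
    · apply Finset.sum_congr rfl
      intro i hi
      have h2 := (Finset.mem_filter.1 hi).2
      have h1 : ¬ t₀ < Z i := by rw [h2]; exact lt_irrefl _
      simp [hπ', h1, h2]
  have hsum1 : ∑ i, π' i = 1 := by
    have h := hsum_split (fun _ => 1)
    simp only [mul_one] at h
    rw [h]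
    have h1 : ∑ i ∈ A, π i / α = Pgt / α := by rw [hPgt, Finset.sum_div]
    have h2 : ∑ i ∈ B, c * π i = c * Peq := by rw [hPeq, Finset.mul_sum]
    rw [h1, h2, hc]
    field_simp
    ring
  -- value of the constructed π'
  set v₀ : ℝ := ∑ i, π' i * Z i with hv₀
  have hv₀S : v₀ ∈ S := ⟨π', hnn', hsum1, hle', rfl⟩
  -- v₀ equals the dual objective at t₀
  have hmaxsum : ∑ i, π i * max (Z i - t₀) 0 = ∑ i ∈ A, π i * (Z i - t₀) := by
    rw [← Finset.sum_subset (Finset.subset_univ A)]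
    · apply Finset.sum_congr rfl
      intro i hi
      have := (Finset.mem_filter.1 hi).2
      rw [max_eq_left (by linarith)]
    · intro i _ hi
      have : ¬ t₀ < Z i := fun h => hi (Finset.mem_filter.2 ⟨Finset.mem_univ _, h⟩)
      rw [max_eq_right (by linarith)]
      ring
  have hv₀T : v₀ ∈ T := by
    refine ⟨t₀, ?_⟩
    rw [hv₀, hsum_split Z, hmaxsum]
    have hB1 : ∑ i ∈ B, (c * π i) * Z i = c * Peq * t₀ := by
      calc ∑ i ∈ B, c * π i * Z i = ∑ i ∈ B, c * π i * t₀ :=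
            Finset.sum_congr rfl (fun i hi => by rw [(Finset.mem_filter.1 hi).2])
        _ = c * Peq * t₀ := by rw [hPeq, Finset.mul_sum, Finset.sum_mul]
    have hA1 : ∑ i ∈ A, (π i / α) * Z i = (1 / α) * ∑ i ∈ A, π i * Z i := by
      rw [Finset.mul_sum]; apply Finset.sum_congr rfl; intro i _; ring
    have hA2 : ∑ i ∈ A, π i * (Z i - t₀) = (∑ i ∈ A, π i * Z i) - Pgt * t₀ := by
      rw [hPgt, Finset.sum_mul, ← Finset.sum_sub_distrib]
      apply Finset.sum_congr rfl; intro i _; ring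
    have hcPeq : c * Peq = (α - Pgt) / α := by
      rw [hc]; field_simp
    rw [hB1, hA1, hA2, hcPeq]
    field_simp
    ring
  -- conclude
  have hSbdd : BddAbove S := ⟨v₀, fun s hs => weak s hs v₀ hv₀T⟩
  have hTbdd : BddBelow T := ⟨v₀, fun v hv => weak v₀ hv₀S v hv⟩
  have h1 : sSup S = v₀ := le_antisymm
    (csSup_le ⟨v₀, hv₀S⟩ (fun s hs => weak s hs v₀ hv₀T))
    (le_csSup hSbdd hv₀S)
  have h2 : sInf T = v₀ := le_antisymm
    (csInf_le hTbdd hv₀T)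
    (le_csInf ⟨v₀, hv₀T⟩ (fun v hv => weak v₀ hv₀S v hv))
  rw [h1, h2]
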